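/- Let Σ₃ = {a,b,c} and let w, w̃ ∈ Σ₃* with ι(w) = ι(w̃) = 1 < k such that |alph(α₀)| = |alph(α₁)| = 2 (hence also |alph(α̃₀)| = |alph(α̃₁)| = 2 whenever w ∼_k w̃, and the modi satisfy m(w)[1] = the letter missing from alph(α₀) and 𝔴(w)[1] = the letter missing from alph(α₁)). Assume m(w) ≠ 𝔴(w) and let y be the unique letter of Σ₃ outside {m(w)[1], 𝔴(w)[1]}. Then w ∼_k w̃ if and only if α_i ∼_{k−1} α̃_i for i ∈ {0,1} and core₁ ∼_{k−c} corẽ₁, where c := ι(α₀) + δ_{y ⪯ re(α₀)} + ι(α₁) + δ_{y ⪯ er(α₁)}. -/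

import Mathlib

/-!
With one arch and both `α`-factors binary, the letter `t` missing from `α₁` opens `β₁`, the letter
`m` missing from `α₀` closes it, and the core is a power `yᵖ`: so `w = α₀ t yᵖ m α₁` with
`α₀ ∈ {t, y}*` and `α₁ ∈ {m, y}*`. The only word of length 2 that is not a scattered factor of
`w` is `m t`, which forces `w̃` into the same shape `α̃₀ t y^q m α̃₁`.

A factor of length at most `k` cuts as `a yᴹ b` with `a ⪯ α₀ t` not ending in `y` and `b ⪯ m α₁`
not starting with `y`; then `a` ends in `t` and `b` starts with `m`, so they only see `α₀` and `α₁`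
up to `∼_{k-1}`. The `y`-block may also borrow from both sides: every factor `a` of `α₀ t` pads to
`a y^{E-|a|} ⪯ α₀ t` with `E = ι(α₀) + δ_{y ⪯ re(α₀)}` (the arches are `ι(α₀)`-universal and the
rest may add one `y`), while the modus gives a factor `φ` of length `E` admitting no further `y`;
symmetrically `F` and `ψ` for `m α₁`. Hence `yᵖ` and `y^q` are interchangeable once both have length
at least `k - E - F`; otherwise, say for `p < q`, the factor `φ y^{p+1} ψ` of length at most `k`
lies in `w̃` but not in `w`.
-/

open List

variable {α : Type*} [DecidableEq α] [Fintype α]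

/-- Simon `k`-congruence: `u` and `v` have the same scattered factors
(subsequences) of length at most `k`. -/
def SimonCongr (k : ℕ) (u v : List α) : Prop :=
  ∀ s : List α, s.length ≤ k → (s.Sublist u ↔ s.Sublist v)

/-- `w` is `k`-universal with respect to the alphabet `S`: every word of length `k`
over `S` is a scattered factor of `w`. -/
def UniversalOn (S : Finset α) (k : ℕ) (w : List α) : Prop :=
  ∀ s : List α, s.length = k → (∀ x ∈ s, x ∈ S) → s.Sublist w

/-- The universality index of `w` w.r.t. the alphabet `S`. -/
noncomputable def iotaOn (S : Finset α) (w : List α) : ℕ :=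
  sSup {k | UniversalOn S k w}

/-- The universality index of `w` w.r.t. the full alphabet. -/
noncomputable def iotaUniv (w : List α) : ℕ := iotaOn Finset.univ w

/-- `a` is an arch w.r.t. `S`: it contains every letter of `S`, and its last letter
belongs to `S` and occurs exactly once in `a`. -/
def IsArchOn (S : Finset α) (a : List α) : Prop :=
  (∀ x ∈ S, x ∈ a) ∧ ∃ a' x, a = a' ++ [x] ∧ x ∈ S ∧ x ∉ a'

/-- `(ars, r)` is the arch factorization of `w` w.r.t. `S`. -/
def IsArchFactOn (S : Finset α) (w : List α) (ars : List (List α)) (r : List α) : Prop :=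
  w = ars.flatten ++ r ∧ (∀ a ∈ ars, IsArchOn S a) ∧ ¬ (∀ x ∈ S, x ∈ r)

/-- `(A, B)` is the α-β-factorization of `w` with `m` arches:
`αᵢ₋₁βᵢ` (for `i ∈ [m]`) together with rest `α_m` is the arch factorization of `w`, and
`(β_{m-i}α_{m-i})^R` together with rest `α₀^R` is the arch factorization of `w^R`. -/
def IsAlphaBetaFact (w : List α) (m : ℕ) (A B : ℕ → List α) : Prop :=
  IsArchFactOn Finset.univ w (List.ofFn fun i : Fin m => A i.val ++ B (i.val + 1)) (A m) ∧
  IsArchFactOn Finset.univ w.reverse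
    (List.ofFn fun i : Fin m => (B (m - i.val) ++ A (m - i.val)).reverse) ((A 0).reverse)

/-- The concatenation `αᵢ βᵢ₊₁ αᵢ₊₁ ⋯ βⱼ αⱼ`. -/
def abSeg (A B : ℕ → List α) (i j : ℕ) : List α :=
  A i ++ (((List.Ico (i + 1) (j + 1)).map fun l => B l ++ A l).flatten)

/-- The core of a `β`-factor: the factor with its first and last letter removed. -/
def coreOf (b : List α) : List α := (b.drop 1).dropLast

section Sublist

variable {β : Type*}

lemma exists_eq_append_replicate_getLast?_ne (l : List β) (y : β) :
    ∃ l' n, l = l' ++ replicate n y ∧ l'.getLast? ≠ some y := by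
  induction l using List.reverseRecOn with
  | nil => exact ⟨[], 0, by simp, by simp⟩
  | append_singleton l a ih =>
    by_cases ha : a = y
    · obtain ⟨l', n, rfl, hl'⟩ := ih
      exact ⟨l', n + 1, by rw [replicate_succ', ← append_assoc, ha], hl'⟩
    · exact ⟨l ++ [a], 0, by simp, by simp [ha]⟩

lemma exists_eq_replicate_append_head?_ne (l : List β) (y : β) :
    ∃ n l', l = replicate n y ++ l' ∧ l'.head? ≠ some y := by
  obtain ⟨l', n, hl, hne⟩ := exists_eq_append_replicate_getLast?_ne l.reverse y
  refine ⟨n, l'.reverse, ?_, by simpa using hne⟩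
  rw [← reverse_reverse l, hl]
  simp

lemma append_eq_append_replicate_append {s₁ s₂ X Z : List β} {y : β} {n : ℕ}
    (h : s₁ ++ s₂ = X ++ replicate n y ++ Z)
    (hX : ∀ c ∈ X.getLast?, c ∉ s₂) (hZ : ∀ c ∈ Z.head?, c ∉ s₁) :
    ∃ i j, i + j = n ∧ s₁ = X ++ replicate i y ∧ s₂ = replicate j y ++ Z := by
  rw [append_assoc, append_eq_append_iff] at h
  rcases h with ⟨c, rfl, rfl⟩ | ⟨c, rfl, h⟩
  · rcases eq_nil_or_concat c with rfl | ⟨L, b, rfl⟩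
    · exact ⟨0, n, by simp, by simp, rfl⟩
    · exact absurd (by simp) (hX b (by simp))
  · rw [eq_comm, append_eq_append_iff] at h
    rcases h with ⟨d, hrep, rfl⟩ | ⟨d, rfl, rfl⟩
    · obtain ⟨hlen, hc, hd⟩ := append_eq_replicate_iff.1 hrep.symm
      exact ⟨c.length, d.length, hlen, by rw [← hc], by rw [← hd]⟩
    · rcases d with _ | ⟨b, d⟩
      · exact ⟨n, 0, by simp, by simp, by simp⟩
      · exact absurd (by simp) (hZ b (by simp))

lemma exists_eq_append_replicate_append_of_sublist {s U V : List β} {y : β} {P : ℕ}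
    (h : s <+ U ++ replicate P y ++ V) :
    ∃ a j b, s = a ++ replicate j y ++ b ∧ a <+ U ∧ j ≤ P ∧ b <+ V := by
  obtain ⟨ab, b, rfl, hab, hb⟩ := sublist_append_iff.1 h
  obtain ⟨a, r, rfl, ha, hr⟩ := sublist_append_iff.1 hab
  obtain ⟨j, hj, rfl⟩ := sublist_replicate_iff.1 hr
  exact ⟨a, j, b, rfl, ha, hj, hb⟩

lemma exists_eq_append_replicate_append_getLast?_ne_of_sublist {s U V : List β} {y : β} {P : ℕ}
    (h : s <+ U ++ replicate P y ++ V) :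
    ∃ a M b, s = a ++ replicate M y ++ b ∧ a <+ U ∧ b <+ V ∧
      a.getLast? ≠ some y ∧ b.head? ≠ some y := by
  obtain ⟨a, j, b, rfl, ha, -, hb⟩ := exists_eq_append_replicate_append_of_sublist h
  obtain ⟨a', i, rfl, ha'⟩ := exists_eq_append_replicate_getLast?_ne a y
  obtain ⟨k, b', rfl, hb'⟩ := exists_eq_replicate_append_head?_ne b y
  exact ⟨a', i + j + k, b', by simp only [replicate_add, append_assoc],
    (sublist_append_left _ _).trans ha, (sublist_append_right _ _).trans hb, ha', hb'⟩

lemma not_mem_of_forall_eq_or_eq {a b x : β} {l : List β} (hl : ∀ c ∈ l, c = a ∨ c = b)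
    (hxa : x ≠ a) (hxb : x ≠ b) : x ∉ l :=
  fun hx => (hl x hx).elim hxa hxb

lemma cons_sublist_append_cons_iff {m : β} {P z v : List β} (hm : m ∉ P) :
    m :: z <+ P ++ m :: v ↔ z <+ v := by
  refine ⟨fun h => ?_, fun h => (h.cons_cons m).trans (sublist_append_right P _)⟩
  obtain ⟨l₁, l₂, hl, h₁, h₂⟩ := sublist_append_iff.1 h
  rcases l₁ with _ | ⟨c, l₁⟩
  · rw [nil_append] at hl
    exact cons_sublist_cons.1 (hl ▸ h₂)
  · obtain ⟨rfl, -⟩ := cons_eq_cons.1 hl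
    exact absurd (h₁.subset mem_cons_self) hm

lemma append_singleton_sublist_append_iff {t : β} {z u R : List β} (ht : t ∉ R) :
    z ++ [t] <+ u ++ [t] ++ R ↔ z <+ u := by
  rw [← reverse_sublist, ← reverse_sublist (l₁ := z)]
  simpa using cons_sublist_append_cons_iff (z := z.reverse) (v := u.reverse) (P := R.reverse)
    (by simpa using ht)

end Sublist

namespace SimonCongr

variable {β : Type*} {k : ℕ} {u v u' v' : List β}

lemma refl (k : ℕ) (u : List β) : SimonCongr k u u := fun _ _ => Iff.rfl

lemma symm (h : SimonCongr k u v) : SimonCongr k v u := fun s hs => (h s hs).symm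

lemma reverse (h : SimonCongr k u v) : SimonCongr k u.reverse v.reverse := fun s hs => by
  simpa only [sublist_reverse_iff] using h s.reverse (by simpa using hs)

lemma mem_iff (h : SimonCongr k u v) (hk : 1 ≤ k) {c : β} : c ∈ u ↔ c ∈ v := by
  simpa using h [c] (by simpa using hk)

lemma sublist_append (hu : SimonCongr k u u') (hv : SimonCongr k v v') {s : List β}
    (hs : s.length ≤ k) (h : s <+ u ++ v) : s <+ u' ++ v' := by
  obtain ⟨s₁, s₂, rfl, h₁, h₂⟩ := sublist_append_iff.1 h
  simp only [length_append] at hs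
  exact ((hu s₁ (by omega)).1 h₁).append ((hv s₂ (by omega)).1 h₂)

lemma append (hu : SimonCongr k u u') (hv : SimonCongr k v v') :
    SimonCongr k (u ++ v) (u' ++ v') := fun _ hs =>
  ⟨hu.sublist_append hv hs, hu.symm.sublist_append hv.symm hs⟩

lemma of_append_singleton_append {t : β} {R R' : List β}
    (h : SimonCongr (k + 1) (u ++ [t] ++ R) (u' ++ [t] ++ R')) (hR : t ∉ R) (hR' : t ∉ R') :
    SimonCongr k u u' := fun s hs =>
  (append_singleton_sublist_append_iff hR).symm.trans
    ((h (s ++ [t]) (by simpa using hs)).trans (append_singleton_sublist_append_iff hR'))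

lemma of_append_cons {m : β} {L L' : List β}
    (h : SimonCongr (k + 1) (L ++ m :: v) (L' ++ m :: v')) (hL : m ∉ L) (hL' : m ∉ L') :
    SimonCongr k v v' := fun s hs =>
  (cons_sublist_append_cons_iff hL).symm.trans
    ((h (m :: s) (by simpa using hs)).trans (cons_sublist_append_cons_iff hL'))

/-- A factor of `u t` not ending in `y` ends in the final `t`, so only its part in `u`
is transferred; this is why length `k + 1` is allowed. -/
lemma sublist_append_singleton {t y : β} (h : SimonCongr k u u')
    (hu : ∀ c ∈ u, c = t ∨ c = y) {a : List β} (ha : a <+ u ++ [t])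
    (hay : a.getLast? ≠ some y) (hlen : a.length ≤ k + 1) : a <+ u' ++ [t] := by
  rcases eq_nil_or_concat a with rfl | ⟨a₀, c, rfl⟩
  · exact nil_sublist _
  obtain rfl : c = t := by
    rcases mem_append.1 (ha.subset (by simp) : c ∈ u ++ [t]) with hc | hc
    · exact (hu c hc).resolve_right (by rintro rfl; simp at hay)
    · simpa using hc
  rw [concat_eq_append, append_sublist_append_right] at ha ⊢
  exact (h a₀ (by simp at hlen; omega)).1 ha

lemma sublist_cons {m y : β} (h : SimonCongr k v v')
    (hv : ∀ c ∈ v, c = m ∨ c = y) {b : List β} (hb : b <+ m :: v)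
    (hby : b.head? ≠ some y) (hlen : b.length ≤ k + 1) : b <+ m :: v' := by
  rw [← reverse_sublist]
  simpa using h.reverse.sublist_append_singleton (a := b.reverse) (by simpa using hv)
    (by simpa using hb.reverse) (by simpa using hby) (by simpa using hlen)

/-- A factor that does not split into pieces of length at most `k` lies entirely in `x` or in
`z`; its outermost letter can then be matched on the other side of `M`. -/
lemma sublist_append_append {x x' z z' M : List β} (hx : SimonCongr k x x')
    (hz : SimonCongr k z z') (hxz : ∀ c ∈ x, c ∈ M ++ z') (hzx : ∀ c ∈ z, c ∈ x' ++ M)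
    {s : List β} (hs : s.length ≤ k + 1) (h : s <+ x ++ M ++ z) : s <+ x' ++ M ++ z' := by
  obtain ⟨s₁₂, s₃, rfl, h₁₂, h₃⟩ := sublist_append_iff.1 h
  obtain ⟨s₁, s₂, rfl, h₁, h₂⟩ := sublist_append_iff.1 h₁₂
  simp only [length_append] at hs
  by_cases hs₁ : s₁.length ≤ k
  · by_cases hs₃ : s₃.length ≤ k
    · exact (((hx s₁ hs₁).1 h₁).append h₂).append ((hz s₃ hs₃).1 h₃)
    obtain ⟨c, s₃, rfl⟩ := exists_cons_of_length_pos (by omega : 0 < s₃.length)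
    obtain ⟨rfl, rfl⟩ : s₁ = [] ∧ s₂ = [] := by
      simp only [length_cons] at hs hs₃
      exact ⟨eq_nil_of_length_eq_zero (by omega), eq_nil_of_length_eq_zero (by omega)⟩
    have hs₃' := (hz s₃ (by simp at hs; omega)).1 ((sublist_cons_self c s₃).trans h₃)
    simpa [append_assoc] using
      (singleton_sublist.2 (hzx c (h₃.subset mem_cons_self))).append hs₃'
  · obtain ⟨s₁, c, rfl⟩ := (eq_nil_or_concat s₁).resolve_left (by rintro rfl; simp at hs₁)
    obtain ⟨rfl, rfl⟩ : s₂ = [] ∧ s₃ = [] := by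
      simp only [concat_eq_append, length_append, length_singleton] at hs hs₁
      exact ⟨eq_nil_of_length_eq_zero (by omega), eq_nil_of_length_eq_zero (by omega)⟩
    rw [concat_eq_append] at h₁ ⊢
    have hs₁' := (hx s₁ (by simp at hs; omega)).1 ((sublist_append_left s₁ [c]).trans h₁)
    simpa [append_assoc] using
      hs₁'.append (singleton_sublist.2 (hxz c (h₁.subset (by simp))))

lemma append_append (hk : 1 ≤ k) {x x' z z' M : List β} (hx : SimonCongr k x x')
    (hz : SimonCongr k z z') (hxz : ∀ c ∈ x, c ∈ M ++ z) (hzx : ∀ c ∈ z, c ∈ x ++ M) :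
    SimonCongr (k + 1) (x ++ M ++ z) (x' ++ M ++ z') := by
  have hxm := fun c => hx.mem_iff hk (c := c)
  have hzm := fun c => hz.mem_iff hk (c := c)
  refine fun s hs => ⟨hx.sublist_append_append hz ?_ ?_ hs,
    hx.symm.sublist_append_append hz.symm ?_ ?_ hs⟩ <;> intro c hc
  · simpa [← hzm] using hxz c hc
  · simpa [← hxm] using hzx c hc
  · exact hxz c ((hxm c).2 hc)
  · exact hzx c ((hzm c).2 hc)

end SimonCongr

lemma simonCongr_replicate_iff {β : Type*} {y : β} {n p q : ℕ} :
    SimonCongr n (replicate p y) (replicate q y) ↔ p = q ∨ n ≤ p ∧ n ≤ q := by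
  refine ⟨fun h => ?_, ?_⟩
  · by_contra hpq
    have := h (replicate (min p q + 1) y) (by simp; omega)
    simp only [replicate_sublist_replicate] at this
    omega
  · rintro (rfl | ⟨hp, hq⟩) s hs
    · rfl
    · simp only [sublist_replicate_iff]
      constructor <;> rintro ⟨j, -, rfl⟩ <;> exact ⟨j, by simp at hs; omega, rfl⟩

section Padding

variable {β : Type*}

def PadsWith (y : β) (U : List β) (n : ℕ) : Prop :=
  ∀ a, a <+ U → a ++ replicate (n - a.length) y <+ U

/-- `n` is the largest length with `PadsWith y U n`. -/
def IsPadLength (y : β) (U : List β) (n : ℕ) : Prop :=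
  PadsWith y U n ∧ ∃ φ : List β, φ.length = n ∧ φ <+ U ∧ ¬ φ ++ [y] <+ U

variable {y : β} {U U' : List β} {n k : ℕ}

lemma PadsWith.of_simonCongr (hU : PadsWith y U n) (h : SimonCongr k U U') :
    PadsWith y U' (min n k) := by
  intro a ha
  by_cases hak : min n k ≤ a.length
  · simpa [Nat.sub_eq_zero_of_le hak] using ha
  have hpad := hU a ((h a (by omega)).2 ha)
  refine (h _ (by simp; omega)).1 (Sublist.trans ?_ hpad)
  exact (append_sublist_append_left a).2 ((replicate_sublist_replicate y).2 (by omega))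

lemma PadsWith.replicate_append_sublist (hU : PadsWith y U.reverse n) {b : List β}
    (hb : b <+ U) : replicate (n - b.length) y ++ b <+ U := by
  simpa using (hU b.reverse hb.reverse).reverse

lemma IsPadLength.pos (h : IsPadLength y U n) (hy : y ∈ U) : 0 < n := by
  obtain ⟨-, φ, rfl, -, hφ⟩ := h
  rcases φ with _ | ⟨c, φ⟩
  · simp [hy] at hφ
  · simp

end Padding

section Arch

variable {β : Type*} {S : Finset β}

lemma sublist_flatten_of_forall_mem {ars : List (List β)} (hars : ∀ a ∈ ars, ∀ x ∈ S, x ∈ a)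
    {s : List β} (hs : s.length ≤ ars.length) (hS : ∀ c ∈ s, c ∈ S) : s <+ ars.flatten := by
  induction ars generalizing s with
  | nil => simp_all
  | cons A ars ih =>
    rcases s with _ | ⟨x, s⟩
    · exact nil_sublist _
    simp only [length_cons, flatten_cons] at hs ⊢
    exact (singleton_sublist.2 (hars A (by simp) x (hS x (by simp)))).append
      (ih (fun a ha => hars a (by simp [ha])) (by omega) (fun c hc => hS c (by simp [hc])))

/-- The word of last letters of the arches (the modus) admits no extension by a letter
missing from the rest. -/
lemma exists_not_append_singleton_sublist {ars : List (List β)} (hars : ∀ a ∈ ars, IsArchOn S a)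
    {r : List β} {z : β} (hz : z ∉ r) :
    ∃ φ : List β, φ.length = ars.length ∧ (∀ c ∈ φ, c ∈ S) ∧ φ <+ ars.flatten ∧
      ¬ φ ++ [z] <+ ars.flatten ++ r := by
  induction ars with
  | nil => exact ⟨[], rfl, by simp, nil_sublist _, by simpa using hz⟩
  | cons A ars ih =>
    obtain ⟨φ, hlen, hS, hsub, hnot⟩ := ih (fun a ha => hars a (by simp [ha]))
    obtain ⟨-, A', x, rfl, hxS, hxA'⟩ := hars _ mem_cons_self
    refine ⟨x :: φ, by simp [hlen], by simpa [hxS] using hS, ?_, ?_⟩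
    · simpa using (sublist_append_right A' [x]).append hsub
    · simpa [cons_sublist_append_cons_iff hxA'] using hnot

lemma iotaOn_eq_length {u : List β} {ars : List (List β)} {r : List β}
    (h : IsArchFactOn S u ars r) : iotaOn S u = ars.length := by
  obtain ⟨rfl, hars, hr⟩ := h
  push Not at hr
  obtain ⟨z, hzS, hzr⟩ := hr
  obtain ⟨φ, hlen, hφS, -, hφ⟩ := exists_not_append_singleton_sublist hars hzr
  have hset : {j | UniversalOn S j (ars.flatten ++ r)} = Set.Iic ars.length := by
    ext j
    simp only [Set.mem_ofPred_eq, Set.mem_Iic]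
    refine ⟨fun hj => ?_, fun hj s hs hsS => ?_⟩
    · by_contra! hlt
      refine hφ ((sublist_append_left _ (replicate (j - (ars.length + 1)) z)).trans
        (hj _ (by simp; omega) ?_))
      simp only [mem_append, mem_replicate, mem_singleton]
      rintro c ((hc | rfl) | ⟨-, rfl⟩)
      exacts [hφS c hc, hzS, hzS]
    · exact (sublist_flatten_of_forall_mem (fun a ha => (hars a ha).1) (by omega) hsS).trans
        (sublist_append_left _ _)
  rw [iotaOn, hset, csSup_Iic]

lemma iotaOn_reverse {u : List β} : iotaOn S u.reverse = iotaOn S u := by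
  have : ∀ j, UniversalOn S j u.reverse ↔ UniversalOn S j u := fun j =>
    ⟨fun h s hs hsS => by simpa using h s.reverse (by simpa) (by simpa),
     fun h s hs hsS => by simpa [sublist_reverse_iff] using h s.reverse (by simpa) (by simpa)⟩
  simp only [iotaOn, this]

end Arch

section PadLength

variable {β : Type*} [DecidableEq β] {t y : β} {u : List β} {ars : List (List β)} {r : List β}

lemma padsWith_of_isArchFactOn (h : IsArchFactOn u.toFinset u ars r) (ht : t ∈ u)
    (hy : y ∈ u) : PadsWith y (u ++ [t]) (ars.length + if y ∈ r then 1 else 0) := by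
  obtain ⟨hu, hars, -⟩ := h
  intro a ha
  by_cases haE : (ars.length + if y ∈ r then 1 else 0) ≤ a.length
  · simpa [Nat.sub_eq_zero_of_le haE] using ha
  have hlen : a.length ≤ ars.length := by split_ifs at haE <;> omega
  have hpad : a ++ replicate (ars.length - a.length) y <+ ars.flatten := by
    refine sublist_flatten_of_forall_mem (fun a ha => (hars a ha).1) (by simp; omega) ?_
    simp only [mem_append, mem_replicate, mem_toFinset]
    rintro c (hc | ⟨-, rfl⟩)
    · rcases mem_append.1 (ha.subset hc) with hc | hc
      · exact hc
      · rwa [mem_singleton.1 hc]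
    · exact hy
  rw [hu]
  split_ifs at haE ⊢ with hyr
  · rw [show ars.length + 1 - a.length = ars.length - a.length + 1 by omega, replicate_succ',
      ← append_assoc]
    exact (hpad.append (singleton_sublist.2 hyr)).trans (sublist_append_left _ _)
  · simpa using hpad.trans ((sublist_append_left _ r).trans (sublist_append_left _ [t]))

lemma exists_not_append_singleton_sublist_of_isArchFactOn (hty : t ≠ y)
    (h : IsArchFactOn u.toFinset u ars r)
    (hu : ∀ c ∈ u, c = t ∨ c = y) (ht : t ∈ u) :
    ∃ φ : List β, φ.length = (ars.length + if y ∈ r then 1 else 0) ∧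
      φ <+ u ++ [t] ∧ ¬ φ ++ [y] <+ u ++ [t] := by
  obtain ⟨rfl, hars, hr⟩ := h
  split_ifs with hyr
  · -- `r t` is one more arch, ending in `t`
    have htr : t ∉ r := fun htr => hr fun c hc => by
      rcases hu c (mem_toFinset.1 hc) with rfl | rfl
      exacts [htr, hyr]
    have hars' : ∀ a ∈ ars ++ [r ++ [t]], IsArchOn (ars.flatten ++ r).toFinset a := by
      intro a ha
      rcases mem_append.1 ha with ha | ha
      · exact hars a ha
      rw [mem_singleton.1 ha]
      refine ⟨fun c hc => ?_, r, t, rfl, mem_toFinset.2 ht, htr⟩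
      rcases hu c (mem_toFinset.1 hc) with rfl | rfl <;> simp [hyr]
    obtain ⟨φ, hlen, -, hsub, hnot⟩ := exists_not_append_singleton_sublist hars' (r := [])
      (z := y) not_mem_nil
    exact ⟨φ, by simpa using hlen, by simpa using hsub, by simpa using hnot⟩
  · obtain ⟨φ, hlen, -, hsub, hnot⟩ := exists_not_append_singleton_sublist hars
      (r := r ++ [t]) (z := y) (by simp [hyr, hty.symm])
    exact ⟨φ, by simpa using hlen,
      (hsub.trans (sublist_append_left _ r)).trans (sublist_append_left _ _),
      by simpa using hnot⟩

lemma isPadLength_of_isArchFactOn (hty : t ≠ y) (h : IsArchFactOn u.toFinset u ars r)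
    (hu : ∀ c ∈ u, c = t ∨ c = y) (ht : t ∈ u) (hy : y ∈ u) :
    IsPadLength y (u ++ [t]) (ars.length + if y ∈ r then 1 else 0) :=
  ⟨padsWith_of_isArchFactOn h ht hy,
    exists_not_append_singleton_sublist_of_isArchFactOn hty h hu ht⟩

end PadLength

section Sandwich

variable {β : Type*} {y : β}

/-- The last non-`y` letter of `φ` must be matched in `U` and the first one of `ψ` in `V`, so all
but `P` of the middle `y`s would have to extend `φ` inside `U` or `ψ` inside `V`. -/
lemma not_sublist_append_replicate_append {U V φ ψ : List β} {P : ℕ}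
    (hφV : ∀ c ∈ φ, c ≠ y → c ∉ V) (hψU : ∀ c ∈ ψ, c ≠ y → c ∉ U)
    (hφ : ¬ φ ++ [y] <+ U) (hψ : ¬ y :: ψ <+ V) :
    ¬ φ ++ replicate (P + 1) y ++ ψ <+ U ++ replicate P y ++ V := by
  intro h
  obtain ⟨φ', a, rfl, hφ'⟩ := exists_eq_append_replicate_getLast?_ne φ y
  obtain ⟨b, ψ', rfl, hψ'⟩ := exists_eq_replicate_append_head?_ne ψ y
  obtain ⟨s₁, j, s₂, hs, h₁, hj, h₂⟩ := exists_eq_append_replicate_append_of_sublist h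
  have hlast : ∀ c ∈ φ'.getLast?, c ∉ replicate j y ++ s₂ := by
    intro c hc hcs
    have hcy : c ≠ y := by rintro rfl; exact hφ' hc
    rcases mem_append.1 hcs with hcs | hcs
    · exact hcy (eq_of_mem_replicate hcs)
    · exact hφV c (mem_append_left _ (mem_of_mem_getLast? hc)) hcy (h₂.subset hcs)
  have hhead : ∀ c ∈ ψ'.head?, c ∉ s₁ := by
    intro c hc hcs
    have hcy : c ≠ y := by rintro rfl; exact hψ' hc
    exact hψU c (mem_append_right _ (mem_of_mem_head? hc)) hcy (h₁.subset hcs)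
  obtain ⟨i, k, hik, rfl, hs₂⟩ := append_eq_append_replicate_append (y := y)
    (n := a + (P + 1) + b) (by simp only [replicate_add, append_assoc] at hs ⊢; exact hs.symm)
    hlast hhead
  obtain ⟨j', k', hjk, hj', rfl⟩ := append_eq_append_replicate_append (X := []) hs₂ (by simp)
    (fun c hc hcj => hψ' (by rwa [eq_of_mem_replicate hcj] at hc))
  have hia : i ≤ a := by
    by_contra! hia
    refine hφ (Sublist.trans ?_ h₁)
    rw [append_assoc, ← replicate_succ']
    exact (append_sublist_append_left _).2 ((replicate_sublist_replicate y).2 hia)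
  have hkb : k' ≤ b := by
    by_contra! hkb
    refine hψ (Sublist.trans ?_ h₂)
    rw [← cons_append, ← replicate_succ]
    exact (append_sublist_append_right _).2 ((replicate_sublist_replicate y).2 hkb)
  have := congrArg length hj'
  simp only [nil_append, length_replicate] at this
  omega

lemma lt_add_of_simonCongr {U V U' V' φ ψ : List β} {K p q : ℕ}
    (hW : SimonCongr (K + 1) (U ++ replicate p y ++ V) (U' ++ replicate q y ++ V'))
    (hU : SimonCongr K U U') (hV : SimonCongr K V V')
    (hφ : φ <+ U) (hφy : ¬ φ ++ [y] <+ U) (hψ : ψ <+ V) (hψy : ¬ y :: ψ <+ V)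
    (hφV : ∀ c ∈ φ, c ≠ y → c ∉ V ∧ c ∉ V') (hψU : ∀ c ∈ ψ, c ≠ y → c ∉ U ∧ c ∉ U')
    (hφ₀ : 0 < φ.length) (hψ₀ : 0 < ψ.length) (hpq : p ≠ q) :
    K < min p q + φ.length + ψ.length := by
  by_contra! hK
  rcases Nat.lt_or_gt_of_ne hpq with hpq | hpq
  · refine not_sublist_append_replicate_append (P := p) (fun c hc hcy => (hφV c hc hcy).1)
      (fun c hc hcy => (hψU c hc hcy).1) hφy hψy ((hW _ (by simp; omega)).2 ?_)
    exact (((hU φ (by omega)).1 hφ).append ((replicate_sublist_replicate y).2 hpq)).append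
      ((hV ψ (by omega)).1 hψ)
  · refine not_sublist_append_replicate_append (P := q) (fun c hc hcy => (hφV c hc hcy).2)
      (fun c hc hcy => (hψU c hc hcy).2) (fun h => hφy ((hU _ (by simp; omega)).2 h))
      (fun h => hψy ((hV _ (by simp; omega)).2 h)) ((hW _ (by simp; omega)).1 ?_)
    exact (hφ.append ((replicate_sublist_replicate y).2 hpq)).append hψ

variable {t m : β}

lemma sublist_sandwich_of_padsWith {u₁ v₁ u₂ v₂ s : List β} {K p₁ p₂ E F : ℕ}
    (hu₁ : ∀ c ∈ u₁, c = t ∨ c = y) (hv₁ : ∀ c ∈ v₁, c = m ∨ c = y)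
    (hu : SimonCongr K u₁ u₂) (hv : SimonCongr K v₁ v₂)
    (hE : PadsWith y (u₂ ++ [t]) E) (hF : PadsWith y (v₂.reverse ++ [m]) F)
    (hp : K + 1 ≤ p₂ + E + F) (hs : s.length ≤ K + 1)
    (h : s <+ u₁ ++ [t] ++ replicate p₁ y ++ m :: v₁) :
    s <+ u₂ ++ [t] ++ replicate p₂ y ++ m :: v₂ := by
  obtain ⟨a, M, b, rfl, ha, hb, hay, hby⟩ :=
    exists_eq_append_replicate_append_getLast?_ne_of_sublist h
  simp only [length_append, length_replicate] at hs
  have ha₂ := hE a (hu.sublist_append_singleton hu₁ ha hay (by omega))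
  have hb₂ := PadsWith.replicate_append_sublist (U := m :: v₂) (by simpa using hF)
    (hv.sublist_cons hv₁ hb hby (by omega))
  have hM : M ≤ E - a.length + p₂ + (F - b.length) := by omega
  calc a ++ replicate M y ++ b
      <+ a ++ replicate (E - a.length + p₂ + (F - b.length)) y ++ b :=
        ((append_sublist_append_left a).2 ((replicate_sublist_replicate y).2 hM)).append
          (Sublist.refl b)
    _ = a ++ replicate (E - a.length) y ++ replicate p₂ y ++
          (replicate (F - b.length) y ++ b) := by simp only [replicate_add, append_assoc]
    _ <+ u₂ ++ [t] ++ replicate p₂ y ++ m :: v₂ := (ha₂.append (Sublist.refl _)).append hb₂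

lemma simonCongr_sandwich_of_le {u v u' v' : List β} {K p q E F : ℕ} (hK : 1 ≤ K)
    (hu : ∀ c ∈ u, c = t ∨ c = y) (hv : ∀ c ∈ v, c = m ∨ c = y)
    (hu' : ∀ c ∈ u', c = t ∨ c = y) (hv' : ∀ c ∈ v', c = m ∨ c = y)
    (cu : SimonCongr K u u') (cv : SimonCongr K v v')
    (hE : PadsWith y (u ++ [t]) E) (hF : PadsWith y (v.reverse ++ [m]) F)
    (hE₁ : 1 ≤ E) (hF₁ : 1 ≤ F) (hp : K + 1 ≤ p + E + F) (hq : K + 1 ≤ q + E + F) :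
    SimonCongr (K + 1) (u ++ [t] ++ replicate p y ++ m :: v)
      (u' ++ [t] ++ replicate q y ++ m :: v') := by
  have hE' := hE.of_simonCongr (cu.append (SimonCongr.refl K [t]))
  have hF' := hF.of_simonCongr (cv.reverse.append (SimonCongr.refl K [m]))
  exact fun s hs => ⟨sublist_sandwich_of_padsWith hu hv cu cv hE' hF' (by omega) hs,
    sublist_sandwich_of_padsWith hu' hv' cu.symm cv.symm hE hF hp hs⟩

lemma simonCongr_sandwich_of_eq {u v u' v' : List β} {K p : ℕ} (hK : 1 ≤ K)
    (hu : ∀ c ∈ u, c = t ∨ c = y) (hv : ∀ c ∈ v, c = m ∨ c = y) (hyu : y ∈ u) (hyv : y ∈ v)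
    (cu : SimonCongr K u u') (cv : SimonCongr K v v') :
    SimonCongr (K + 1) (u ++ [t] ++ replicate p y ++ m :: v)
      (u' ++ [t] ++ replicate p y ++ m :: v') := by
  have e (x z : List β) : x ++ [t] ++ replicate p y ++ m :: z =
      x ++ ([t] ++ replicate p y ++ [m]) ++ z := by simp
  rw [e, e]
  refine cu.append_append hK cv (fun c hc => ?_) (fun c hc => ?_)
  · rcases hu c hc with rfl | rfl <;> simp [hyv]
  · rcases hv c hc with rfl | rfl <;> simp [hyu]

lemma lt_add_of_simonCongr_sandwich (htm : t ≠ m) (hty : t ≠ y) (hmy : m ≠ y)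
    {u v u' v' : List β} (hu : ∀ c ∈ u, c = t ∨ c = y) (hv : ∀ c ∈ v, c = m ∨ c = y)
    (hu' : ∀ c ∈ u', c = t ∨ c = y) (hv' : ∀ c ∈ v', c = m ∨ c = y) {E F K p q : ℕ}
    (hE : IsPadLength y (u ++ [t]) E) (hF : IsPadLength y (v.reverse ++ [m]) F)
    (hE₁ : 0 < E) (hF₁ : 0 < F)
    (hW : SimonCongr (K + 1) (u ++ [t] ++ replicate p y ++ m :: v)
      (u' ++ [t] ++ replicate q y ++ m :: v'))
    (cu : SimonCongr K u u') (cv : SimonCongr K v v') (hpq : p ≠ q) :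
    K < min p q + E + F := by
  obtain ⟨-, φ, rfl, hφ, hφy⟩ := hE
  obtain ⟨-, ψ, rfl, hψ, hψy⟩ := hF
  have hφt : ∀ c ∈ φ, c ≠ y → c = t := fun c hc hcy => by
    rcases mem_append.1 (hφ.subset hc) with h | h
    exacts [(hu c h).resolve_right hcy, by simpa using h]
  have hψm : ∀ c ∈ ψ, c ≠ y → c = m := fun c hc hcy => by
    rcases mem_append.1 (hψ.subset hc) with h | h
    exacts [(hv c (by simpa using h)).resolve_right hcy, by simpa using h]
  have htv {z : List β} (hz : ∀ c ∈ z, c = m ∨ c = y) : t ∉ m :: z := by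
    simp [htm, not_mem_of_forall_eq_or_eq hz htm hty]
  have hmu {z : List β} (hz : ∀ c ∈ z, c = t ∨ c = y) : m ∉ z ++ [t] := by
    simp [htm.symm, not_mem_of_forall_eq_or_eq hz htm.symm hmy]
  simpa using lt_add_of_simonCongr hW (cu.append (.refl K [t])) ((SimonCongr.refl K [m]).append cv)
    hφ hφy (ψ := ψ.reverse) (by simpa using hψ.reverse) (fun h => hψy (by simpa using h.reverse))
    (fun c hc hcy => hφt c hc hcy ▸ ⟨htv hv, htv hv'⟩)
    (fun c hc hcy => hψm c (by simpa using hc) hcy ▸ ⟨hmu hu, hmu hu'⟩) hE₁ (by simpa using hF₁)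
    hpq

theorem simonCongr_sandwich_iff (htm : t ≠ m) (hty : t ≠ y) (hmy : m ≠ y) {u v u' v' : List β}
    (hu : ∀ c ∈ u, c = t ∨ c = y) (hv : ∀ c ∈ v, c = m ∨ c = y)
    (hu' : ∀ c ∈ u', c = t ∨ c = y) (hv' : ∀ c ∈ v', c = m ∨ c = y)
    (hyu : y ∈ u) (hyv : y ∈ v) {E F K p q : ℕ} (hK : 1 ≤ K)
    (hE : IsPadLength y (u ++ [t]) E) (hF : IsPadLength y (v.reverse ++ [m]) F) :
    SimonCongr (K + 1) (u ++ [t] ++ replicate p y ++ m :: v)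
        (u' ++ [t] ++ replicate q y ++ m :: v') ↔
      SimonCongr K u u' ∧ SimonCongr K v v' ∧
        SimonCongr (K + 1 - (E + F)) (replicate p y) (replicate q y) := by
  have hE₁ := hE.pos (by simp [hyu])
  have hF₁ := hF.pos (by simp [hyv])
  rw [simonCongr_replicate_iff]
  constructor
  · intro hW
    have cu := SimonCongr.of_append_singleton_append (R := replicate p y ++ m :: v)
      (R' := replicate q y ++ m :: v') (by simpa only [append_assoc] using hW)
      (by simp [hty, htm, not_mem_of_forall_eq_or_eq hv htm hty])
      (by simp [hty, htm, not_mem_of_forall_eq_or_eq hv' htm hty])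
    have cv := hW.of_append_cons
      (by simp [hmy, htm.symm, not_mem_of_forall_eq_or_eq hu htm.symm hmy])
      (by simp [hmy, htm.symm, not_mem_of_forall_eq_or_eq hu' htm.symm hmy])
    refine ⟨cu, cv, or_iff_not_imp_left.2 fun hpq => ?_⟩
    have := lt_add_of_simonCongr_sandwich htm hty hmy hu hv hu' hv' hE hF hE₁ hF₁ hW cu cv hpq
    omega
  · rintro ⟨cu, cv, rfl | ⟨hp, hq⟩⟩
    · exact simonCongr_sandwich_of_eq hK hu hv hyu hyv cu cv
    · exact simonCongr_sandwich_of_le hK hu hv hu' hv' cu cv hE.1 hF.1 hE₁ hF₁ (by omega)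
        (by omega)

end Sandwich

section AlphaBeta

variable {β : Type*} [Fintype β] {w : List β} {A B : ℕ → List β}

lemma IsAlphaBetaFact.one_arch (h : IsAlphaBetaFact w 1 A B) :
    w = A 0 ++ B 1 ++ A 1 ∧ ∃ t m b₁ b₂, B 1 = b₁ ++ [m] ∧ B 1 = t :: b₂ ∧
      m ∉ A 0 ++ b₁ ∧ t ∉ b₂ ++ A 1 := by
  obtain ⟨⟨hw, harch, -⟩, ⟨-, harch', hrest⟩⟩ := h
  simp only [Fin.val_eq_zero, zero_add, ofFn_succ, ofFn_zero, flatten_cons, flatten_nil,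
    append_nil, mem_cons, not_mem_nil, or_false, forall_eq, tsub_zero, reverse_append,
    Finset.mem_univ, mem_reverse, forall_const, not_forall] at hw harch harch' hrest
  obtain ⟨hall, a, m, ha, -, hm⟩ := harch
  obtain ⟨-, a', t, ha', -, ht⟩ := harch'
  obtain ⟨x, hx⟩ := hrest
  have hB : B 1 ≠ [] := fun hB => hx (by simpa [hB] using hall x (Finset.mem_univ x))
  obtain ⟨b₁, m', hb₁⟩ := (eq_nil_or_concat (B 1)).resolve_left hB
  obtain ⟨t', b₂, hb₂⟩ := exists_cons_of_ne_nil hB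
  rw [concat_eq_append] at hb₁
  rw [hb₁, ← append_assoc] at ha
  obtain ⟨rfl, hm'⟩ := append_inj' ha rfl
  rw [hb₂, reverse_cons, ← append_assoc] at ha'
  obtain ⟨rfl, ht'⟩ := append_inj' ha' rfl
  simp only [cons.injEq, and_true] at hm' ht'
  subst hm' ht'
  exact ⟨hw, t', m', b₁, b₂, hb₁, hb₂, hm, by simpa [or_comm] using ht⟩

variable {t m : β}

lemma IsAlphaBetaFact.not_pair_sublist (h : IsAlphaBetaFact w 1 A B)
    (ht : (B 1).head? = some t) (hm : (B 1).getLast? = some m) : ¬ [m, t] <+ w := by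
  obtain ⟨hw, t', m', b₁, b₂, hb₁, hb₂, hm', ht'⟩ := h.one_arch
  obtain rfl : t' = t := by simpa [hb₂] using ht
  obtain rfl : m' = m := by simpa [hb₁] using hm
  rw [show w = (A 0 ++ b₁) ++ m' :: A 1 by simp [hw, hb₁], cons_sublist_append_cons_iff hm',
    singleton_sublist]
  exact fun h => ht' (mem_append_right _ h)

lemma IsAlphaBetaFact.exists_replicate {y : β} (htri : ∀ c, c = t ∨ c = m ∨ c = y)
    (htm : t ≠ m) (h : IsAlphaBetaFact w 1 A B) (ht : (B 1).head? = some t)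
    (hm : (B 1).getLast? = some m) :
    ∃ p, w = A 0 ++ [t] ++ replicate p y ++ m :: A 1 ∧ B 1 = t :: (replicate p y ++ [m]) ∧
      (∀ c ∈ A 0, c = t ∨ c = y) ∧ (∀ c ∈ A 1, c = m ∨ c = y) := by
  obtain ⟨hw, t', m', b₁, b₂, hb₁, hb₂, hm', ht'⟩ := h.one_arch
  obtain rfl : t' = t := by simpa [hb₂] using ht
  obtain rfl : m' = m := by simpa [hb₁] using hm
  rcases b₁ with _ | ⟨c, γ⟩
  · simp [hb₂] at hb₁
    exact absurd hb₁.1 htm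
  obtain ⟨rfl, rfl⟩ : c = t' ∧ b₂ = γ ++ [m'] := by simpa [hb₂, eq_comm] using hb₁
  have hγ : γ = replicate γ.length y := eq_replicate_iff.2 ⟨rfl, fun c hc =>
    ((htri c).resolve_left fun h => ht' (by simp [← h, hc])).resolve_left
      fun h => hm' (by simp [← h, hc])⟩
  refine ⟨γ.length, ?_, by rw [hb₂, ← hγ], fun c hc => ?_, fun c hc => ?_⟩
  · rw [hw, hb₂, ← hγ]
    simp
  · exact (htri c).imp_right (Or.resolve_left · fun h => hm' (by simp [← h, hc]))
  · exact (htri c).resolve_left fun h => ht' (by simp [← h, hc])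

lemma IsAlphaBetaFact.head?_getLast?_of_simonCongr {w' : List β} {A' B' : ℕ → List β}
    (h' : IsAlphaBetaFact w' 1 A' B') {k : ℕ} (hk : 2 ≤ k) (hc : SimonCongr k w w')
    (hpair : ∀ x z, ¬ (x = m ∧ z = t) → [x, z] <+ w) :
    (B' 1).head? = some t ∧ (B' 1).getLast? = some m := by
  obtain ⟨-, t', m', b₁, b₂, hb₁, hb₂, -, -⟩ := h'.one_arch
  have ht' : (B' 1).head? = some t' := by simp [hb₂]
  have hm' : (B' 1).getLast? = some m' := by simp [hb₁]
  obtain ⟨rfl, rfl⟩ : m' = m ∧ t' = t := by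
    by_contra hne
    exact h'.not_pair_sublist ht' hm' ((hc _ (by simpa using hk)).1 (hpair _ _ hne))
  exact ⟨ht', hm'⟩

lemma IsAlphaBetaFact.head?_getLast?_of_mem {y : β} (htri : ∀ c, c = t ∨ c = m ∨ c = y)
    (h : IsAlphaBetaFact w 1 A B) (ht : t ∈ A 0) (hy₀ : y ∈ A 0) (hm : m ∈ A 1)
    (hy₁ : y ∈ A 1) : (B 1).head? = some t ∧ (B 1).getLast? = some m := by
  obtain ⟨-, t', m', b₁, b₂, hb₁, hb₂, hm', ht'⟩ := h.one_arch
  constructor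
  · rw [hb₂, head?_cons]
    rcases htri t' with rfl | rfl | rfl
    exacts [rfl, absurd hm (by simp_all), absurd hy₁ (by simp_all)]
  · rw [hb₁, getLast?_concat]
    rcases htri m' with rfl | rfl | rfl
    exacts [absurd ht (by simp_all), rfl, absurd hy₀ (by simp_all)]

end AlphaBeta

lemma pair_sublist_sandwich {β : Type*} {t m y x z : β} {u v : List β} {p : ℕ}
    (htri : ∀ c, c = t ∨ c = m ∨ c = y) (ht : t ∈ u) (hyu : y ∈ u) (hm : m ∈ v) (hyv : y ∈ v)
    (hxz : ¬ (x = m ∧ z = t)) : [x, z] <+ u ++ [t] ++ replicate p y ++ m :: v := by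
  have hu : ∀ c, c ≠ m → c ∈ u := fun c hc => by
    rcases htri c with rfl | rfl | rfl
    exacts [ht, absurd rfl hc, hyu]
  have hv : ∀ c, c ≠ t → c ∈ v := fun c hc => by
    rcases htri c with rfl | rfl | rfl
    exacts [absurd rfl hc, hm, hyv]
  rcases eq_or_ne x m with rfl | hx
  · exact (cons_sublist_cons.2 (singleton_sublist.2 (hv z fun h => hxz ⟨rfl, h⟩))).trans
      (sublist_append_right _ _)
  rcases eq_or_ne z t with rfl | hz
  · exact ((((singleton_sublist.2 (hu x hx)).append (Sublist.refl [z])).trans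
      (sublist_append_left _ _)).trans (sublist_append_left _ _))
  · exact (singleton_sublist.2 (by simp [hu x hx])).append
      (singleton_sublist.2 (mem_cons_of_mem m (hv z hz)))

lemma mem_and_mem_of_card_toFinset_eq_two {β : Type*} [DecidableEq β] {a b : β} {l : List β}
    (hl : ∀ c ∈ l, c = a ∨ c = b) (h : l.toFinset.card = 2) : a ∈ l ∧ b ∈ l := by
  have : l.toFinset = {a, b} := Finset.eq_of_subset_of_card_le
    (fun c hc => by simpa using hl c (mem_toFinset.1 hc)) (h ▸ Finset.card_le_two)
  simp [← mem_toFinset, this]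

lemma coreOf_cons_append_singleton {β : Type*} (t m : β) (l : List β) :
    coreOf (t :: (l ++ [m])) = l := by
  simp [coreOf]

lemma fin_three_eq_or_eq_or_eq {a b c : Fin 3} (hab : a ≠ b) (hac : a ≠ c) (hbc : b ≠ c)
    (x : Fin 3) : x = a ∨ x = b ∨ x = c := by
  revert a b c x
  decide

theorem ternary_both_alpha_binary_congr_general (k : ℕ) (hk : 1 < k)
    (w w' : List (Fin 3)) (A B A' B' : ℕ → List (Fin 3))
    (hw : IsAlphaBetaFact w 1 A B) (hw' : IsAlphaBetaFact w' 1 A' B')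
    (hcard₀ : (A 0).toFinset.card = 2) (hcard₁ : (A 1).toFinset.card = 2)
    (mw ww : Fin 3)
    (hm : (B 1).getLast? = some mw) (hrm : (B 1).head? = some ww)
    (hne : mw ≠ ww)
    (y : Fin 3) (hy1 : y ≠ mw) (hy2 : y ≠ ww)
    (ars₀ : List (List (Fin 3))) (r₀ : List (Fin 3))
    (h₀ : IsArchFactOn ((A 0).toFinset) (A 0) ars₀ r₀)
    (ars₁ : List (List (Fin 3))) (r₁ : List (Fin 3))
    (h₁ : IsArchFactOn ((A 1).toFinset) ((A 1).reverse) ars₁ r₁) :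
    SimonCongr k w w' ↔
      (SimonCongr (k - 1) (A 0) (A' 0) ∧ SimonCongr (k - 1) (A 1) (A' 1) ∧
        SimonCongr
          (k - (iotaOn ((A 0).toFinset) (A 0) + (if y ∈ r₀ then 1 else 0)
                + iotaOn ((A 1).toFinset) (A 1) + (if y ∈ r₁ then 1 else 0)))
          (coreOf (B 1)) (coreOf (B' 1))) := by
  obtain ⟨K, rfl⟩ : ∃ K, k = K + 1 := ⟨k - 1, by omega⟩
  have htri := fin_three_eq_or_eq_or_eq hne.symm hy2.symm hy1.symm
  obtain ⟨p, hwp, hB, hu, hv⟩ := hw.exists_replicate htri hne.symm hrm hm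
  obtain ⟨hwu, hyu⟩ := mem_and_mem_of_card_toFinset_eq_two hu hcard₀
  obtain ⟨hmv, hyv⟩ := mem_and_mem_of_card_toFinset_eq_two hv hcard₁
  have hE := isPadLength_of_isArchFactOn hy2.symm h₀ hu hwu hyu
  have hF := isPadLength_of_isArchFactOn hy1.symm (by rwa [toFinset_reverse]) (by simpa using hv)
    (by simpa using hmv) (by simpa using hyv)
  have hι₁ : iotaOn (A 1).toFinset (A 1) = ars₁.length := by
    rw [← iotaOn_reverse, iotaOn_eq_length h₁]
  rw [iotaOn_eq_length h₀, hι₁, Nat.add_sub_cancel, hB, coreOf_cons_append_singleton,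
    add_assoc (ars₀.length + _)]
  constructor
  · intro hc
    obtain ⟨ht', hm'⟩ := hw'.head?_getLast?_of_simonCongr (by omega) hc
      fun x z hxz => hwp ▸ pair_sublist_sandwich htri hwu hyu hmv hyv hxz
    obtain ⟨q, hwq, hB', hu', hv'⟩ := hw'.exists_replicate htri hne.symm ht' hm'
    rw [hB', coreOf_cons_append_singleton]
    rw [hwp, hwq] at hc
    exact (simonCongr_sandwich_iff hne.symm hy2.symm hy1.symm hu hv hu' hv' hyu hyv
      (by omega) hE hF).1 hc
  · rintro ⟨c₀, c₁, c₂⟩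
    obtain ⟨ht', hm'⟩ := hw'.head?_getLast?_of_mem htri ((c₀.mem_iff (by omega)).1 hwu)
      ((c₀.mem_iff (by omega)).1 hyu) ((c₁.mem_iff (by omega)).1 hmv)
      ((c₁.mem_iff (by omega)).1 hyv)
    obtain ⟨q, hwq, hB', hu', hv'⟩ := hw'.exists_replicate htri hne.symm ht' hm'
    rw [hB', coreOf_cons_append_singleton] at c₂
    rw [hwp, hwq]
    exact (simonCongr_sandwich_iff hne.symm hy2.symm hy1.symm hu hv hu' hv' hyu hyv
      (by omega) hE hF).2 ⟨c₀, c₁, c₂⟩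

/-- ternary words with one arch whose `α`-factors both have
two-letter alphabets are `k`-congruent iff their `α`-factors are
`(k−1)`-congruent and their cores are `(k−c)`-congruent, where
`c = ι(α₀) + δ_{y ⪯ re(α₀)} + ι(α₁) + δ_{y ⪯ er(α₁)}`. -/
theorem ternary_both_alpha_binary_congr (k : ℕ) (hk : 1 < k)
    (w w' : List (Fin 3)) (A B A' B' : ℕ → List (Fin 3))
    (hw : IsAlphaBetaFact w 1 A B) (hw' : IsAlphaBetaFact w' 1 A' B')
    (hiw : iotaUniv w = 1) (hiw' : iotaUniv w' = 1)
    (hcard₀ : (A 0).toFinset.card = 2) (hcard₁ : (A 1).toFinset.card = 2)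
    (mw ww : Fin 3)
    (hmw : mw ∉ (A 0).toFinset) (hww : ww ∉ (A 1).toFinset)
    (hm : (B 1).getLast? = some mw) (hrm : (B 1).head? = some ww)
    (hne : mw ≠ ww)
    (y : Fin 3) (hy1 : y ≠ mw) (hy2 : y ≠ ww)
    (ars₀ : List (List (Fin 3))) (r₀ : List (Fin 3))
    (h₀ : IsArchFactOn ((A 0).toFinset) (A 0) ars₀ r₀)
    (ars₁ : List (List (Fin 3))) (r₁ : List (Fin 3))
    (h₁ : IsArchFactOn ((A 1).toFinset) ((A 1).reverse) ars₁ r₁) :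
    SimonCongr k w w' ↔
      (SimonCongr (k - 1) (A 0) (A' 0) ∧ SimonCongr (k - 1) (A 1) (A' 1) ∧
        SimonCongr
          (k - (iotaOn ((A 0).toFinset) (A 0) + (if y ∈ r₀ then 1 else 0)
                + iotaOn ((A 1).toFinset) (A 1) + (if y ∈ r₁ then 1 else 0)))
          (coreOf (B 1)) (coreOf (B' 1))) :=
  ternary_both_alpha_binary_congr_general k hk w w' A B A' B' hw hw' hcard₀ hcard₁ mw ww hm hrm hne
    y hy1 hy2 ars₀ r₀ h₀ ars₁ r₁ h₁
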